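/- arXiv:1108.0632 — 2 statements merged into one kernel-verified Lean document; each statement's English description precedes it below -/
import Mathlib

section
/- Let K be a convex subset of ℝ^k and f : K → ℝ a concave function. If f is affine on each of two line segments S₁ = [v, v + λ₁ b₁] and S₂ = [m, m + λ₂ b₂] where m is the midpoint of S₁, λ₁, λ₂ > 0, and moreover f is affine on the union S₁ ∪ S₂, then f is affine on the convex hull of S₁ ∪ S₂. -/
/-!
Let `g` be the affine function agreeing with `f` on `S₁ ∪ S₂`; then `f - g` is concave and vanishes
on `S₁ ∪ S₂`. By the minimum principle, `f - g ≥ 0` on the hull, which is the triangle spanned by the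
endpoints `v`, `w` of `S₁` and the far endpoint `z` of the median `S₂`. Conversely, for `p` in the
triangle, the segment from `p` to one of `v`, `w` crosses the median, and concavity along that
segment, with `f - g` vanishing at both the crossing point and the endpoint, forces `(f - g) p ≤ 0`.
-/

/-- `f` agrees on `S` with an affine function `x ↦ ⟨a, x⟩ + c`. -/
def IsAffineOnSet {k : ℕ} (f : (Fin k → ℝ) → ℝ) (S : Set (Fin k → ℝ)) : Prop :=
  ∃ (a : Fin k → ℝ) (c : ℝ), ∀ x ∈ S, f x = (∑ i, a i * x i) + c

open Set

section Triangle

variable {E : Type*} [AddCommGroup E] [Module ℝ E]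

lemma ConcaveOn.nonpos_of_smul_add_smul_nonpos {s : Set E} {h : E → ℝ} (hh : ConcaveOn ℝ s h)
    {p q : E} (hp : p ∈ s) (hq : q ∈ s) {t : ℝ} (ht₀ : 0 < t) (ht₁ : t ≤ 1) (hq₀ : 0 ≤ h q)
    (hpq : h (t • p + (1 - t) • q) ≤ 0) : h p ≤ 0 := by
  have := hh.2 hp hq ht₀.le (sub_nonneg.2 ht₁) (add_sub_cancel t 1)
  simp only [smul_eq_mul] at this
  nlinarith

lemma convexHull_segment_union_segment_midpoint (v w z : E) :
    convexHull ℝ (segment ℝ v w ∪ segment ℝ (midpoint ℝ v w) z) = convexHull ℝ {v, w, z} := by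
  have hsub : {v, w, z} ⊆ segment ℝ v w ∪ segment ℝ (midpoint ℝ v w) z := by
    rintro _ (rfl | rfl | rfl)
    · exact .inl (left_mem_segment ℝ _ _)
    · exact .inl (right_mem_segment ℝ _ _)
    · exact .inr (right_mem_segment ℝ _ _)
  refine (convexHull_min (union_subset ?_ ?_) (convex_convexHull ℝ _)).antisymm
    (convexHull_mono hsub)
  · exact segment_subset_convexHull (by simp) (by simp)
  · refine (convex_convexHull ℝ _).segment_subset ?_ (subset_convexHull ℝ _ (by simp))
    exact segment_subset_convexHull (by simp) (by simp) (midpoint_mem_segment v w)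

/-- For `p = α • v + β • w + γ • z` in the triangle with `β ≤ α`, the segment from `w` to `p` meets
the median from `midpoint ℝ v w` to `z`. -/
lemma smul_add_smul_mem_segment_midpoint (v w z : E) {α β γ : ℝ} (hβ : 0 ≤ β) (hγ : 0 ≤ γ)
    (hβα : β ≤ α) (hsum : α + β + γ = 1) :
    (1 + α - β)⁻¹ • (α • v + β • w + γ • z) + (1 - (1 + α - β)⁻¹) • w
      ∈ segment ℝ (midpoint ℝ v w) z := by
  have hα : 0 ≤ α := hβ.trans hβα
  have hpos : 0 < 1 + α - β := by linarith
  refine ⟨(1 + α - β)⁻¹ * (2 * α), (1 + α - β)⁻¹ * γ, by positivity, by positivity, ?_, ?_⟩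
  · field_simp; linarith
  · rw [midpoint_eq_smul_add, invOf_eq_inv]
    have hγ' : γ = 1 - α - β := by linarith
    subst hγ'
    match_scalars
    · field_simp
    · field_simp; ring
    · field_simp

lemma exists_smul_add_smul_mem_segment_midpoint {v w z p : E}
    (hp : p ∈ convexHull ℝ {v, w, z}) :
    ∃ q ∈ ({v, w} : Set E), ∃ t : ℝ, 0 < t ∧ t ≤ 1 ∧
      t • p + (1 - t) • q ∈ segment ℝ (midpoint ℝ v w) z := by
  rw [← convexJoin_segment_singleton, convexJoin_singleton_right] at hp
  obtain ⟨y, ⟨a, b, ha, hb, hab, rfl⟩, c, d, hc, hd, hcd, rfl⟩ := mem_iUnion₂.1 hp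
  have hcoords : c • (a • v + b • w) + d • z = (c * a) • v + (c * b) • w + d • z := by module
  have hsum : c * a + c * b + d = 1 := by linear_combination c * hab + hcd
  rcases le_total b a with hba | hab'
  · refine ⟨w, by simp, (1 + c * a - c * b)⁻¹, inv_pos.2 (by nlinarith),
      inv_le_one_of_one_le₀ (by nlinarith), ?_⟩
    rw [hcoords]
    exact smul_add_smul_mem_segment_midpoint v w z (by positivity) hd
      (mul_le_mul_of_nonneg_left hba hc) hsum
  · refine ⟨v, by simp, (1 + c * b - c * a)⁻¹, inv_pos.2 (by nlinarith),
      inv_le_one_of_one_le₀ (by nlinarith), ?_⟩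
    rw [hcoords, add_comm ((c * a) • v), midpoint_comm]
    exact smul_add_smul_mem_segment_midpoint w v z (by positivity) hd
      (mul_le_mul_of_nonneg_left hab' hc) (by linarith)

theorem ConcaveOn.eqOn_zero_convexHull_segment_union_segment_midpoint {v w z : E} {h : E → ℝ}
    (hh : ConcaveOn ℝ (convexHull ℝ (segment ℝ v w ∪ segment ℝ (midpoint ℝ v w) z)) h)
    (h₀ : EqOn h 0 (segment ℝ v w ∪ segment ℝ (midpoint ℝ v w) z)) :
    EqOn h 0 (convexHull ℝ (segment ℝ v w ∪ segment ℝ (midpoint ℝ v w) z)) := by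
  set T := segment ℝ v w ∪ segment ℝ (midpoint ℝ v w) z
  intro p hp
  refine le_antisymm ?_ ?_
  · obtain ⟨q, hq, t, ht₀, ht₁, hmem⟩ := exists_smul_add_smul_mem_segment_midpoint
      ((convexHull_segment_union_segment_midpoint v w z) ▸ hp)
    have hqT : q ∈ T := by
      rcases hq with rfl | rfl
      · exact .inl (left_mem_segment ℝ _ _)
      · exact .inl (right_mem_segment ℝ _ _)
    exact hh.nonpos_of_smul_add_smul_nonpos hp (subset_convexHull ℝ T hqT) ht₀ ht₁
      (h₀ hqT).ge (h₀ (.inr hmem)).le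
  · obtain ⟨y, hyT, hy⟩ := hh.exists_le_of_mem_convexHull (subset_convexHull ℝ T) hp
    exact (h₀ hyT).symm.le.trans hy

end Triangle

theorem concave_affine_on_T_implies_affine_on_convexHull_general
    (k : ℕ) (K : Set (Fin k → ℝ)) (hK : Convex ℝ K)
    (f : (Fin k → ℝ) → ℝ) (hf : ConcaveOn ℝ K f)
    (v b₁ b₂ : Fin k → ℝ) (l₁ l₂ : ℝ)
    (S₁ : Set (Fin k → ℝ)) (hS₁ : S₁ = segment ℝ v (v + l₁ • b₁))
    (m : Fin k → ℝ) (hm : m = v + (l₁ / 2) • b₁)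
    (S₂ : Set (Fin k → ℝ)) (hS₂ : S₂ = segment ℝ m (m + l₂ • b₂))
    (hsub : S₁ ∪ S₂ ⊆ K)
    (haff : IsAffineOnSet f (S₁ ∪ S₂)) :
    IsAffineOnSet f (convexHull ℝ (S₁ ∪ S₂)) := by
  obtain ⟨a, c, hfg⟩ := haff
  refine ⟨a, c, fun p hp ↦ sub_eq_zero.1 ?_⟩
  obtain rfl : m = midpoint ℝ v (v + l₁ • b₁) := by
    rw [hm, midpoint_eq_smul_add, invOf_eq_inv]; module
  have hconc : ConcaveOn ℝ (convexHull ℝ (S₁ ∪ S₂)) (f - fun x ↦ dotProductBilin ℝ ℝ a x + c) :=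
    (hf.subset (convexHull_min hsub hK) (convex_convexHull ℝ _)).sub
      (((dotProductBilin ℝ ℝ a).convexOn (convex_convexHull ℝ _)).add_const c)
  subst hS₁ hS₂
  exact hconc.eqOn_zero_convexHull_segment_union_segment_midpoint
    (fun x hx ↦ sub_eq_zero.2 (hfg x hx)) hp

theorem concave_affine_on_T_implies_affine_on_convexHull
    (k : ℕ) (K : Set (Fin k → ℝ)) (hK : Convex ℝ K)
    (f : (Fin k → ℝ) → ℝ) (hf : ConcaveOn ℝ K f)
    (v b₁ b₂ : Fin k → ℝ) (l₁ l₂ : ℝ) (hl₁ : 0 < l₁) (hl₂ : 0 < l₂)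
    (hb₁ : ∑ i, b₁ i * b₁ i = 1) (hb₂ : ∑ i, b₂ i * b₂ i = 1)
    (hb₁₂ : ∑ i, b₁ i * b₂ i = 0)
    (S₁ : Set (Fin k → ℝ)) (hS₁ : S₁ = segment ℝ v (v + l₁ • b₁))
    (m : Fin k → ℝ) (hm : m = v + (l₁ / 2) • b₁)
    (S₂ : Set (Fin k → ℝ)) (hS₂ : S₂ = segment ℝ m (m + l₂ • b₂))
    (hsub : S₁ ∪ S₂ ⊆ K)
    (haff₁ : IsAffineOnSet f S₁) (haff₂ : IsAffineOnSet f S₂)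
    (haff : IsAffineOnSet f (S₁ ∪ S₂)) :
    IsAffineOnSet f (convexHull ℝ (S₁ ∪ S₂)) :=
  concave_affine_on_T_implies_affine_on_convexHull_general k K hK f hf v b₁ b₂ l₁ l₂ S₁ hS₁ m hm S₂
    hS₂ hsub haff
end

section
/- Let P ⊆ ℝ^k be a convex set, f : P → ℝ_{≥0} a non-negative concave function, and let V ⊆ P be the set of points v such that for every line segment S ⊆ P containing v, the point (v, f(v)) is an extremal point of Q_S = {(x, y) : x ∈ S, 0 ≤ y ≤ f(x)}. If Q := {(x, y) : x ∈ P, 0 ≤ y ≤ f(x)} is compact and convex, then every extremal point of Q lies in the set {(v, f(v)) : v ∈ V} ∪ (P × {0}). -/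
/-!
A point `(x, y)` of the body with `0 < y < f x` lies in the open vertical segment from `(x, 0)` to
`(x, f x)`, so an extreme point lies either on the base (`y = 0`) or on the graph (`y = f x`).
A point of the graph that is extreme in the whole body stays extreme in every sub-body over a
segment through `x`, since extremality passes to subsets containing the point.
-/

open Set

variable {E : Type*}

/-- The body `Q_S` of the paper. -/
def fiberedBody (S : Set E) (f : E → ℝ) : Set (E × ℝ) :=
  {p | p.1 ∈ S ∧ 0 ≤ p.2 ∧ p.2 ≤ f p.1}

lemma fiberedBody_mono {S T : Set E} (hST : S ⊆ T) (f : E → ℝ) :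
    fiberedBody S f ⊆ fiberedBody T f :=
  fun _ ⟨hS, hp⟩ ↦ ⟨hST hS, hp⟩

variable [AddCommGroup E] [Module ℝ E]

lemma snd_eq_zero_or_eq_of_mem_extremePoints_fiberedBody {S : Set E} {f : E → ℝ}
    {p : E × ℝ} (hp : p ∈ (fiberedBody S f).extremePoints ℝ) : p.2 = 0 ∨ p.2 = f p.1 := by
  obtain ⟨⟨hS, hy0, hyf⟩, hext⟩ := hp
  by_contra! hne
  have hbase : (p.1, 0) ∈ fiberedBody S f := ⟨hS, le_rfl, hy0.trans hyf⟩
  have htop : (p.1, f p.1) ∈ fiberedBody S f := ⟨hS, hy0.trans hyf, le_rfl⟩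
  have hmem : p ∈ openSegment ℝ (p.1, 0) (p.1, f p.1) := by
    rw [← Prod.image_mk_openSegment_right, openSegment_eq_Ioo (hy0.trans_lt (hyf.lt_of_ne hne.2))]
    exact ⟨p.2, ⟨hy0.lt_of_ne hne.1.symm, hyf.lt_of_ne hne.2⟩, rfl⟩
  exact hne.1 (congrArg Prod.snd (hext hbase htop hmem)).symm

lemma mem_extremePoints_fiberedBody_of_subset {S T : Set E} {f : E → ℝ} (hST : S ⊆ T)
    {x : E} (hx : x ∈ S) (hxf : (x, f x) ∈ (fiberedBody T f).extremePoints ℝ) :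
    (x, f x) ∈ (fiberedBody S f).extremePoints ℝ :=
  inter_extremePoints_subset_extremePoints_of_subset (fiberedBody_mono hST f)
    ⟨⟨hx, hxf.1.2⟩, hxf⟩

theorem extreme_points_of_fibered_body_general
    (k : ℕ) (P : Set (Fin k → ℝ)) (hP : Convex ℝ P)
    (f : (Fin k → ℝ) → ℝ)
    (V : Set (Fin k → ℝ))
    (hV : V = {v ∈ P | ∀ a ∈ P, ∀ b ∈ P, v ∈ segment ℝ a b →
      (v, f v) ∈ Set.extremePoints ℝ
        {p : (Fin k → ℝ) × ℝ | p.1 ∈ segment ℝ a b ∧ 0 ≤ p.2 ∧ p.2 ≤ f p.1}})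
    (Q : Set ((Fin k → ℝ) × ℝ))
    (hQ : Q = {p : (Fin k → ℝ) × ℝ | p.1 ∈ P ∧ 0 ≤ p.2 ∧ p.2 ≤ f p.1}) :
    Set.extremePoints ℝ Q ⊆
      {p : (Fin k → ℝ) × ℝ | ∃ v ∈ V, p = (v, f v)} ∪
      {p : (Fin k → ℝ) × ℝ | p.1 ∈ P ∧ p.2 = 0} := by
  change Q = fiberedBody P f at hQ
  subst hQ hV
  rintro ⟨x, y⟩ hp
  obtain hy | hy := snd_eq_zero_or_eq_of_mem_extremePoints_fiberedBody hp
  · exact Or.inr ⟨hp.1.1, hy⟩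
  · obtain rfl : y = f x := hy
    refine Or.inl ⟨x, ⟨hp.1.1, fun a ha b hb hx ↦ ?_⟩, rfl⟩
    exact mem_extremePoints_fiberedBody_of_subset (hP.segment_subset ha hb) hx hp

theorem extreme_points_of_fibered_body
    (k : ℕ) (P : Set (Fin k → ℝ)) (hP : Convex ℝ P)
    (f : (Fin k → ℝ) → ℝ) (hf0 : ∀ x ∈ P, 0 ≤ f x)
    (hconc : ConcaveOn ℝ P f)
    (V : Set (Fin k → ℝ))
    (hV : V = {v ∈ P | ∀ a ∈ P, ∀ b ∈ P, v ∈ segment ℝ a b →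
      (v, f v) ∈ Set.extremePoints ℝ
        {p : (Fin k → ℝ) × ℝ | p.1 ∈ segment ℝ a b ∧ 0 ≤ p.2 ∧ p.2 ≤ f p.1}})
    (Q : Set ((Fin k → ℝ) × ℝ))
    (hQ : Q = {p : (Fin k → ℝ) × ℝ | p.1 ∈ P ∧ 0 ≤ p.2 ∧ p.2 ≤ f p.1})
    (hQc : IsCompact Q) (hQconv : Convex ℝ Q) :
    Set.extremePoints ℝ Q ⊆
      {p : (Fin k → ℝ) × ℝ | ∃ v ∈ V, p = (v, f v)} ∪
      {p : (Fin k → ℝ) × ℝ | p.1 ∈ P ∧ p.2 = 0} :=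
  extreme_points_of_fibered_body_general k P hP f V hV Q hQ
end
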